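/- Let α ∈ (0,2), r > 0, θ₂ > 0. Then ψ_{r,α}(θ₂) = (2/(θ₂^{1−α}·π))·∫₀^∞ ((1 − e^{−x²})/x^{1+2α})·(J₀(√2·r·x/√θ₂) − 2·J₀(r·x/√θ₂) + 1) dx is strictly positive. -/

import Mathlib

/-!
Writing `B y = J₀(√2 y) − 2 J₀(y) + 1`, the product-to-sum formula and the substitutions
`t ↦ π/2 − t`, `t ↦ t ± π/4` give `B y = (2/π) ∫₀^{π/2} (1 − cos (y cos t)) (1 − cos (y sin t)) dt`.
Hence `0 ≤ B ≤ 4`, `B y ≤ y⁴/4` (from `1 − cos u ≤ u²/2`), and `B y > 0` for `0 < y < 2π`.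
With `c = r/√θ₂` the integrand is `(1 − e^{−x²}) x^{−1−2α} B(c x)`: it is nonnegative, bounded by
`(c⁴/4) x^{5−2α}` near `0` and by `4 x^{−1−2α}` near `∞`, so integrable for `0 < α < 3`, and
positive on `(0, 2π/c)`.
-/

open Real MeasureTheory Set

/-- Bessel function of the first kind of order 0, via its integral representation. -/
noncomputable def J0 (x : ℝ) : ℝ := (2 / π) * ∫ t in (0:ℝ)..(π/2), Real.cos (x * Real.sin t)

open intervalIntegral

lemma integral_cos_mul_sin (y : ℝ) : ∫ t in 0..π / 2, cos (y * sin t) = π / 2 * J0 y := by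
  rw [J0]; field_simp

lemma integral_cos_mul_cos (y : ℝ) : ∫ t in 0..π / 2, cos (y * cos t) = π / 2 * J0 y := by
  rw [← integral_cos_mul_sin]
  simpa [sin_pi_div_two_sub] using
    integral_comp_sub_left (fun t => cos (y * sin t)) (π / 2) (a := 0) (b := π / 2)

lemma integral_cos_mul_sin_zero_pi (y : ℝ) : ∫ t in 0..π, cos (y * sin t) = π * J0 y := by
  have hc : Continuous fun t => cos (y * sin t) := by fun_prop
  have h_reflect : ∫ t in π / 2..π, cos (y * sin t) = ∫ t in 0..π / 2, cos (y * sin t) := by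
    simpa [sin_pi_sub, show π - π / 2 = π / 2 by ring] using
      (integral_comp_sub_left (fun t => cos (y * sin t)) π (a := 0) (b := π / 2)).symm
  rw [← integral_add_adjacent_intervals (b := π / 2) (hc.intervalIntegrable _ _)
    (hc.intervalIntegrable _ _), h_reflect, integral_cos_mul_sin]
  ring

lemma integral_cos_mul_cos_sub_sin_add_cos_mul_cos_add_sin (y : ℝ) :
    ∫ t in 0..π / 2, (cos (y * (cos t - sin t)) + cos (y * (cos t + sin t))) =
      π * J0 (√2 * y) := by
  -- The two terms are `F (t - π/4)` and `F (t + π/4)`; together they sweep out one period of `F`.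
  set F : ℝ → ℝ := fun u => cos (√2 * y * sin u)
  have hF : Continuous F := by fun_prop
  have hF_periodic : Function.Periodic F π := fun u => by simp [F, sin_add_pi]
  have h2 : √2 * √2 = 2 := mul_self_sqrt zero_le_two
  have h_sub : ∀ t, cos (y * (cos t - sin t)) = F (t - π / 4) := fun t => by
    rw [← cos_neg]
    simp only [F, sin_sub, sin_pi_div_four, cos_pi_div_four]
    congr 1
    linear_combination (y * (cos t - sin t) / 2) * h2
  have h_add : ∀ t, cos (y * (cos t + sin t)) = F (t + π / 4) := fun t => by
    simp only [F, sin_add, sin_pi_div_four, cos_pi_div_four]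
    congr 1
    linear_combination (-(y * (cos t + sin t)) / 2) * h2
  simp only [h_sub, h_add]
  rw [integral_add (Continuous.intervalIntegrable (by fun_prop) _ _)
      (Continuous.intervalIntegrable (by fun_prop) _ _),
    integral_comp_sub_right, integral_comp_add_right, zero_add, zero_sub,
    show π / 2 - π / 4 = π / 4 by ring,
    integral_add_adjacent_intervals (hF.intervalIntegrable _ _) (hF.intervalIntegrable _ _),
    show π / 2 + π / 4 = -(π / 4) + π by ring, hF_periodic.intervalIntegral_add_eq _ 0, zero_add]
  exact integral_cos_mul_sin_zero_pi _

lemma one_sub_cos_mul_one_sub_cos (a b : ℝ) :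
    (1 - cos a) * (1 - cos b) = 1 - cos a - cos b + (cos (a - b) + cos (a + b)) / 2 := by
  rw [cos_sub, cos_add]; ring

noncomputable def J0Comb (y : ℝ) : ℝ := J0 (√2 * y) - 2 * J0 y + 1

lemma J0Comb_eq_integral (y : ℝ) :
    J0Comb y = 2 / π * ∫ t in 0..π / 2, (1 - cos (y * cos t)) * (1 - cos (y * sin t)) := by
  rw [J0Comb]
  simp only [one_sub_cos_mul_one_sub_cos, ← mul_sub, ← mul_add]
  rw [integral_add (Continuous.intervalIntegrable (by fun_prop) _ _)
      (Continuous.intervalIntegrable (by fun_prop) _ _),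
    integral_sub (Continuous.intervalIntegrable (by fun_prop) _ _)
      (Continuous.intervalIntegrable (by fun_prop) _ _),
    integral_sub intervalIntegrable_const (Continuous.intervalIntegrable (by fun_prop) _ _),
    intervalIntegral.integral_div, integral_cos_mul_sin, integral_cos_mul_cos,
    integral_cos_mul_cos_sub_sin_add_cos_mul_cos_add_sin]
  simp only [intervalIntegral.integral_const, smul_eq_mul, mul_one, sub_zero]
  field_simp
  ring

@[fun_prop]
lemma continuous_J0 : Continuous J0 :=
  continuous_const.mul <| intervalIntegral.continuous_parametric_intervalIntegral_of_continuous
    (by fun_prop) continuous_const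

@[fun_prop]
lemma continuous_J0Comb : Continuous J0Comb := by
  unfold J0Comb; fun_prop

lemma J0Comb_nonneg (y : ℝ) : 0 ≤ J0Comb y := by
  rw [J0Comb_eq_integral]
  refine mul_nonneg (by positivity) (integral_nonneg (by positivity) fun t _ => ?_)
  exact mul_nonneg (sub_nonneg.2 (cos_le_one _)) (sub_nonneg.2 (cos_le_one _))

lemma J0Comb_le_of_forall_le {y M : ℝ}
    (h : ∀ t ∈ Icc 0 (π / 2), (1 - cos (y * cos t)) * (1 - cos (y * sin t)) ≤ M) :
    J0Comb y ≤ M := by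
  have hle := integral_mono_on (μ := volume) (by positivity)
    (Continuous.intervalIntegrable (by fun_prop) _ _) intervalIntegrable_const h
  rw [J0Comb_eq_integral]
  calc 2 / π * ∫ t in 0..π / 2, (1 - cos (y * cos t)) * (1 - cos (y * sin t))
      ≤ 2 / π * ∫ _ in 0..π / 2, M := mul_le_mul_of_nonneg_left hle (by positivity)
    _ = M := by simp only [intervalIntegral.integral_const, smul_eq_mul]; field_simp; ring

lemma J0Comb_le_four (y : ℝ) : J0Comb y ≤ 4 := by
  refine J0Comb_le_of_forall_le fun t _ => ?_
  have h₁ := neg_one_le_cos (y * cos t)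
  have h₂ := cos_le_one (y * sin t)
  nlinarith [neg_one_le_cos (y * sin t)]

lemma J0Comb_le_pow_four (y : ℝ) : J0Comb y ≤ y ^ 4 / 4 := by
  refine J0Comb_le_of_forall_le fun t _ => ?_
  have h_cos : 1 - cos (y * cos t) ≤ y ^ 2 / 2 := by
    nlinarith [one_sub_sq_div_two_le_cos (x := y * cos t), cos_sq_le_one t, sq_nonneg y]
  have h_sin : 1 - cos (y * sin t) ≤ y ^ 2 / 2 := by
    nlinarith [one_sub_sq_div_two_le_cos (x := y * sin t), sin_sq_le_one t, sq_nonneg y]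
  calc (1 - cos (y * cos t)) * (1 - cos (y * sin t)) ≤ y ^ 2 / 2 * (y ^ 2 / 2) :=
        mul_le_mul h_cos h_sin (sub_nonneg.2 (cos_le_one _)) (by positivity)
    _ = y ^ 4 / 4 := by ring

lemma one_sub_cos_pos {u : ℝ} (h₀ : 0 < u) (h₁ : u < 2 * π) : 0 < 1 - cos u := by
  have hne : cos u ≠ 1 := fun h => h₀.ne' ((cos_eq_one_iff_of_lt_of_lt (by linarith) h₁).1 h)
  linarith [(cos_le_one u).lt_of_ne hne]

lemma J0Comb_pos {y : ℝ} (h₀ : 0 < y) (h₁ : y < 2 * π) : 0 < J0Comb y := by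
  rw [J0Comb_eq_integral]
  refine mul_pos (by positivity) (intervalIntegral_pos_of_pos_on
    (Continuous.intervalIntegrable (by fun_prop) _ _) (fun t ht => ?_) (by positivity))
  have hcos : 0 < cos t := cos_pos_of_mem_Ioo ⟨by linarith [ht.1], ht.2⟩
  have hsin : 0 < sin t := sin_pos_of_pos_of_lt_pi ht.1 (by linarith [ht.2])
  exact mul_pos
    (one_sub_cos_pos (mul_pos h₀ hcos) ((mul_le_of_le_one_right h₀.le (cos_le_one t)).trans_lt h₁))
    (one_sub_cos_pos (mul_pos h₀ hsin) ((mul_le_of_le_one_right h₀.le (sin_le_one t)).trans_lt h₁))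

lemma integrableOn_Ioi_zero_of_rpow_bounds {f : ℝ → ℝ} {p q C D : ℝ} (hp : -1 < p) (hq : q < -1)
    (hf : AEStronglyMeasurable f (volume.restrict (Ioi 0)))
    (h₀ : ∀ x ∈ Ioc 0 1, ‖f x‖ ≤ C * x ^ p) (h₁ : ∀ x ∈ Ioi 1, ‖f x‖ ≤ D * x ^ q) :
    IntegrableOn f (Ioi 0) := by
  rw [← Ioc_union_Ioi_eq_Ioi zero_le_one]
  refine IntegrableOn.union ?_ ?_
  · refine Integrable.mono' ((intervalIntegrable_rpow' hp).1.const_mul C)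
      (hf.mono_set Ioc_subset_Ioi_self) ?_
    exact (ae_restrict_iff' measurableSet_Ioc).2 (ae_of_all _ h₀)
  · refine Integrable.mono' ((integrableOn_Ioi_rpow_of_lt hq one_pos).const_mul D)
      (hf.mono_set (Ioi_subset_Ioi zero_le_one)) ?_
    exact (ae_restrict_iff' measurableSet_Ioi).2 (ae_of_all _ h₁)

lemma setIntegral_Ioi_pos {f : ℝ → ℝ} {a b : ℝ} (hab : a < b) (hf : IntegrableOn f (Ioi a))
    (h_nonneg : ∀ x ∈ Ioi a, 0 ≤ f x) (h_pos : ∀ x ∈ Ioo a b, 0 < f x) :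
    0 < ∫ x in Ioi a, f x := by
  rw [setIntegral_pos_iff_support_of_nonneg_ae
    ((ae_restrict_iff' measurableSet_Ioi).2 (ae_of_all _ h_nonneg)) hf]
  calc (0 : ENNReal) < volume (Ioo a b) := by simpa using hab
    _ ≤ volume (Function.support f ∩ Ioi a) :=
      measure_mono fun x hx => ⟨(h_pos x hx).ne', hx.1⟩

lemma one_sub_exp_neg_sq_le_sq (x : ℝ) : 1 - exp (-x ^ 2) ≤ x ^ 2 := by
  linarith [add_one_le_exp (-x ^ 2)]

lemma one_sub_exp_neg_sq_pos {x : ℝ} (hx : x ≠ 0) : 0 < 1 - exp (-x ^ 2) := by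
  have : exp (-x ^ 2) < 1 := exp_lt_one_iff.2 (neg_neg_of_pos (sq_pos_of_ne_zero hx))
  linarith

noncomputable def psiIntegrand (α c x : ℝ) : ℝ :=
  (1 - exp (-x ^ 2)) / x ^ (1 + 2 * α) * J0Comb (c * x)

lemma psiIntegrand_nonneg (α c : ℝ) {x : ℝ} (hx : 0 < x) : 0 ≤ psiIntegrand α c x :=
  mul_nonneg (div_nonneg (one_sub_exp_neg_sq_pos hx.ne').le (rpow_pos_of_pos hx _).le)
    (J0Comb_nonneg _)

lemma psiIntegrand_pos (α : ℝ) {c x : ℝ} (hc : 0 < c) (hx : 0 < x) (hcx : c * x < 2 * π) :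
    0 < psiIntegrand α c x :=
  mul_pos (div_pos (one_sub_exp_neg_sq_pos hx.ne') (rpow_pos_of_pos hx _))
    (J0Comb_pos (mul_pos hc hx) hcx)

lemma integrableOn_psiIntegrand {α : ℝ} (hα₀ : 0 < α) (hα₃ : α < 3) (c : ℝ) :
    IntegrableOn (psiIntegrand α c) (Ioi 0) := by
  have hcont : ContinuousOn (psiIntegrand α c) (Ioi 0) := by
    refine ContinuousOn.mul (ContinuousOn.div (by fun_prop) ?_ ?_) (by fun_prop)
    · exact fun x hx => (continuousAt_rpow_const x _ (Or.inl (ne_of_gt hx))).continuousWithinAt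
    · exact fun x hx => (rpow_pos_of_pos hx _).ne'
  refine integrableOn_Ioi_zero_of_rpow_bounds (p := 5 - 2 * α) (q := -(1 + 2 * α))
    (C := c ^ 4 / 4) (D := 4) (by linarith) (by linarith)
    (hcont.aestronglyMeasurable measurableSet_Ioi) (fun x hx => ?_) (fun x hx => ?_)
  · have hx₀ : 0 < x := hx.1
    rw [Real.norm_of_nonneg (psiIntegrand_nonneg α c hx₀)]
    calc psiIntegrand α c x ≤ x ^ 2 / x ^ (1 + 2 * α) * ((c * x) ^ 4 / 4) :=
          mul_le_mul (div_le_div_of_nonneg_right (one_sub_exp_neg_sq_le_sq x)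
            (rpow_pos_of_pos hx₀ _).le) (J0Comb_le_pow_four _) (J0Comb_nonneg _) (by positivity)
      _ = c ^ 4 / 4 * x ^ (5 - 2 * α) := by
          rw [show 5 - 2 * α = (6 : ℕ) - (1 + 2 * α) by push_cast; ring, rpow_sub hx₀,
            rpow_natCast]
          ring
  · have hx₀ : 0 < x := one_pos.trans hx
    rw [Real.norm_of_nonneg (psiIntegrand_nonneg α c hx₀)]
    calc psiIntegrand α c x ≤ 1 / x ^ (1 + 2 * α) * 4 :=
          mul_le_mul (div_le_div_of_nonneg_right (by linarith [exp_pos (-x ^ 2)])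
            (rpow_pos_of_pos hx₀ _).le) (J0Comb_le_four _) (J0Comb_nonneg _) (by positivity)
      _ = 4 * x ^ (-(1 + 2 * α)) := by rw [rpow_neg hx₀.le]; ring

theorem psi_pos (α r θ₂ : ℝ) (hα : α ∈ Set.Ioo (0:ℝ) 2) (hr : 0 < r) (hθ₂ : 0 < θ₂) :
    0 < (2 / (θ₂ ^ (1 - α) * π)) *
      ∫ x in Ioi (0:ℝ), ((1 - Real.exp (-x^2)) / x ^ (1 + 2*α)) *
        (J0 (Real.sqrt 2 * r * x / Real.sqrt θ₂) - 2 * J0 (r * x / Real.sqrt θ₂) + 1) := by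
  set c := r / √θ₂
  have hc : 0 < c := by positivity
  have h_integrand : ∀ x, (1 - exp (-x ^ 2)) / x ^ (1 + 2 * α) *
      (J0 (√2 * r * x / √θ₂) - 2 * J0 (r * x / √θ₂) + 1) = psiIntegrand α c x := fun x => by
    simp only [psiIntegrand, J0Comb, c]
    ring_nf
  simp only [h_integrand]
  refine mul_pos (by positivity) (setIntegral_Ioi_pos (b := 2 * π / c) (by positivity)
    (integrableOn_psiIntegrand hα.1 (by linarith [hα.2]) c)
    (fun x hx => psiIntegrand_nonneg α c hx) (fun x hx => psiIntegrand_pos α hc hx.1 ?_))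
  exact (lt_div_iff₀' hc).1 hx.2
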